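/- Correctness of the model-counting condition for weak PAXp's of decision trees (eq. (22)): with the hypotheses and notation of the box-partition setting (pairwise disjoint boxes B_1,…,B_n with union 𝔽, κ constant c_k on B_k, v ∈ 𝔽 with κ(v) = c, and #_k = ∏_{i ∈ X} |E_{i,k} ∩ {v_i}| · ∏_{i ∉ X} |E_{i,k}|), for every δ ∈ [0,1] the set X ⊆ F satisfies WeakPAXp(X; δ) if and only if Σ_{k : c_k = c} #_k ≥ δ · Σ_{k=1}^n #_k. -/

import Mathlib

/-!
The boxes cut the subcube `{x | x_X = v_X}` into the products `∏ i, E_{k,i} ∩ {v_i}` (`i ∈ X`)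
times `∏ i, E_{k,i}` (`i ∉ X`), of sizes `#_k`, and `κ` is constant on each piece. Hence both
counts in `WeakPAXp` are sums of `#_k`, over the boxes of class `c` and over all boxes
respectively, and the two inequalities coincide.
-/

open Finset Function

section PiFinset

variable {ι : Type*} [Fintype ι] [DecidableEq ι] {α : ι → Type*} [∀ i, DecidableEq (α i)]

theorem filter_piFinset_eqOn_eq_piFinset (E : ∀ i, Finset (α i)) (X : Finset ι) (v : ∀ i, α i) :
    (Fintype.piFinset E).filter (fun x => ∀ i ∈ X, x i = v i) =
      Fintype.piFinset (fun i => if i ∈ X then E i ∩ {v i} else E i) := by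
  ext x
  simp only [mem_filter, Fintype.mem_piFinset]
  constructor
  · rintro ⟨hE, hv⟩ i
    split_ifs with hi
    · exact mem_inter.mpr ⟨hE i, mem_singleton.mpr (hv i hi)⟩
    · exact hE i
  · intro h
    refine ⟨fun i => ?_, fun i hi => ?_⟩
    · have hxi := h i
      split_ifs at hxi
      exacts [(mem_inter.mp hxi).1, hxi]
    · have hxi := h i
      rw [if_pos hi] at hxi
      exact mem_singleton.mp (mem_inter.mp hxi).2

theorem card_filter_piFinset_eqOn (E : ∀ i, Finset (α i)) (X : Finset ι) (v : ∀ i, α i) :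
    #((Fintype.piFinset E).filter (fun x => ∀ i ∈ X, x i = v i)) =
      (∏ i ∈ X, #(E i ∩ {v i})) * ∏ i ∈ Xᶜ, #(E i) := by
  rw [filter_piFinset_eqOn_eq_piFinset, Fintype.card_piFinset, ← prod_mul_prod_compl X]
  congr 1
  · exact prod_congr rfl fun i hi => by rw [if_pos hi]
  · exact prod_congr rfl fun i hi => by rw [if_neg (mem_compl.mp hi)]

end PiFinset

theorem card_filter_eq_sum_card_filter_of_partition {α ι : Type*} [Fintype α] [Fintype ι]
    [DecidableEq α] (S : ι → Finset α) (hdisj : Pairwise (Disjoint on S))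
    (hcover : ∀ x, ∃ k, x ∈ S k) (p : α → Prop) [DecidablePred p] :
    #(univ.filter p) = ∑ k, #((S k).filter p) := by
  have huniv : (univ : Finset α) = univ.biUnion S :=
    (eq_univ_of_forall fun x => by simpa using hcover x).symm
  rw [huniv, filter_biUnion, card_biUnion]
  exact fun k _ l _ hkl => disjoint_filter_filter (hdisj hkl)

theorem filter_and_eq_ite_of_forall_eq {α K : Type*} [DecidableEq K] {s : Finset α} {κ : α → K}
    {a : K} (hκ : ∀ x ∈ s, κ x = a) (c : K) (q : α → Prop) [DecidablePred q] :
    s.filter (fun x => κ x = c ∧ q x) = if a = c then s.filter q else ∅ := by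
  split_ifs with hac
  · exact filter_congr fun x hx => by simp [hκ x hx, hac]
  · exact filter_false_of_mem fun x hx h => hac (hκ x hx ▸ h.1)

theorem box_partition_weak_paxp_iff_general
    {m : ℕ} (D : Fin m → Type) [∀ i, Fintype (D i)]
    [∀ i, DecidableEq (D i)]
    {K : Type} [DecidableEq K] (κ : ((i : Fin m) → D i) → K)
    (v : (i : Fin m) → D i) (c : K)
    (n : ℕ) (E : Fin n → (i : Fin m) → Finset (D i)) (cls : Fin n → K)
    (hdisj : ∀ k l : Fin n, k ≠ l → ∀ x : (i : Fin m) → D i,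
      ¬ ((∀ i, x i ∈ E k i) ∧ (∀ i, x i ∈ E l i)))
    (hcover : ∀ x : (i : Fin m) → D i, ∃ k : Fin n, ∀ i, x i ∈ E k i)
    (hconst : ∀ (k : Fin n) (x : (i : Fin m) → D i), (∀ i, x i ∈ E k i) → κ x = cls k)
    (δ : ℝ)
    (X : Finset (Fin m)) :
    ((Nat.card {x : (i : Fin m) → D i // κ x = c ∧ ∀ i ∈ X, x i = v i} : ℝ) ≥
        δ * (Nat.card {x : (i : Fin m) → D i // ∀ i ∈ X, x i = v i} : ℝ)) ↔
      ((∑ k ∈ Finset.univ.filter (fun k : Fin n => cls k = c),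
          (∏ i ∈ X, (E k i ∩ {v i}).card) * ∏ i ∈ Xᶜ, (E k i).card : ℕ) : ℝ) ≥
        δ * ((∑ k : Fin n,
          (∏ i ∈ X, (E k i ∩ {v i}).card) * ∏ i ∈ Xᶜ, (E k i).card : ℕ) : ℝ) := by
  let box : Fin n → Finset ((i : Fin m) → D i) := fun k => Fintype.piFinset (E k)
  have hbox_disj : Pairwise (Disjoint on box) := fun k l hkl =>
    disjoint_left.mpr fun x hk hl =>
      hdisj k l hkl x ⟨Fintype.mem_piFinset.mp hk, Fintype.mem_piFinset.mp hl⟩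
  have hbox_cover : ∀ x, ∃ k, x ∈ box k := fun x => by
    simpa [box, Fintype.mem_piFinset] using hcover x
  have hcount (p : ((i : Fin m) → D i) → Prop) [DecidablePred p] :
      Nat.card {x // p x} = ∑ k, #((box k).filter p) := by
    rw [Nat.card_eq_fintype_card, Fintype.card_subtype,
      card_filter_eq_sum_card_filter_of_partition box hbox_disj hbox_cover]
  have hbox_card (k : Fin n) :
      #((box k).filter fun x => ∀ i ∈ X, x i = v i) =
        (∏ i ∈ X, #(E k i ∩ {v i})) * ∏ i ∈ Xᶜ, #(E k i) := by
    -- the two sides differ only in the `Decidable` instance of the filter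
    convert card_filter_piFinset_eqOn (E k) X v
  have hbox_card_cls (k : Fin n) :
      #((box k).filter fun x => κ x = c ∧ ∀ i ∈ X, x i = v i) =
        if cls k = c then (∏ i ∈ X, #(E k i ∩ {v i})) * ∏ i ∈ Xᶜ, #(E k i) else 0 := by
    rw [filter_and_eq_ite_of_forall_eq (fun x hx => hconst k x (Fintype.mem_piFinset.mp hx)),
      apply_ite card, card_empty, hbox_card]
  rw [hcount, hcount, sum_filter]
  simp only [hbox_card, hbox_card_cls]

/-- Correctness of the model-counting condition for weak PAXp's of decision trees
(eq. (22)): in the box-partition setting, `X` is a weak PAXp for threshold `δ`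
iff `Σ_{k : c_k = c} #_k ≥ δ · Σ_k #_k`. -/
theorem box_partition_weak_paxp_iff
    {m : ℕ} (hm : 1 ≤ m) (D : Fin m → Type) [∀ i, Fintype (D i)] [∀ i, Nonempty (D i)]
    [∀ i, DecidableEq (D i)]
    {K : Type} [DecidableEq K] (κ : ((i : Fin m) → D i) → K)
    (v : (i : Fin m) → D i) (c : K) (hv : κ v = c)
    (n : ℕ) (E : Fin n → (i : Fin m) → Finset (D i)) (cls : Fin n → K)
    (hdisj : ∀ k l : Fin n, k ≠ l → ∀ x : (i : Fin m) → D i,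
      ¬ ((∀ i, x i ∈ E k i) ∧ (∀ i, x i ∈ E l i)))
    (hcover : ∀ x : (i : Fin m) → D i, ∃ k : Fin n, ∀ i, x i ∈ E k i)
    (hconst : ∀ (k : Fin n) (x : (i : Fin m) → D i), (∀ i, x i ∈ E k i) → κ x = cls k)
    (δ : ℝ) (hδ0 : 0 ≤ δ) (hδ1 : δ ≤ 1)
    (X : Finset (Fin m)) :
    ((Nat.card {x : (i : Fin m) → D i // κ x = c ∧ ∀ i ∈ X, x i = v i} : ℝ) ≥
        δ * (Nat.card {x : (i : Fin m) → D i // ∀ i ∈ X, x i = v i} : ℝ)) ↔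
      ((∑ k ∈ Finset.univ.filter (fun k : Fin n => cls k = c),
          (∏ i ∈ X, (E k i ∩ {v i}).card) * ∏ i ∈ Xᶜ, (E k i).card : ℕ) : ℝ) ≥
        δ * ((∑ k : Fin n,
          (∏ i ∈ X, (E k i ∩ {v i}).card) * ∏ i ∈ Xᶜ, (E k i).card : ℕ) : ℝ) :=
  box_partition_weak_paxp_iff_general D κ v c n E cls hdisj hcover hconst δ X
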